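/- arXiv:1306.2729 — 2 statements merged into one kernel-verified Lean document; each statement's English description precedes it below -/
import Mathlib

section
/- Let A be the free abelian group of rank d (realized as Fin d → ℤ, written multiplicatively) and let χ : A → ℂˣ be a nontrivial group homomorphism. Then the group cohomology H^i(A, ℂ_χ) of A with coefficients in the one-dimensional representation ℂ_χ vanishes for every i ≥ 0. -/
/-- The one-dimensional representation of a group `G` on `ℂ` in which `g : G` acts by
multiplication by `χ g`, for a group homomorphism `χ : G →* ℂˣ`. -/
noncomputable def charRep {G : Type} [Group G] (χ : G →* ℂˣ) : Rep ℂ G :=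
  Rep.of (((Algebra.lmul ℂ ℂ).toMonoidHom.comp ((Units.coeHom ℂ).comp χ) :
    G →* (ℂ →ₗ[ℂ] ℂ)))

/-!
For a commutative group `G`, each `s : G` acts on every representation by a `G`-equivariant map,
naturally in the representation, so `ρ s - 1` is an element `w` of the center of `Rep k G`.
A central endomorphism acts on `Extⁿ(X, Y)` in the same way through either argument: on a
projective resolution `P` of `X`, the maps `w` form a chain map lifting `w_X`, and precomposing
with `w_P` is postcomposing with `w_Y`. Here `w` vanishes on the trivial representation, so it is
null-homotopic on a resolution of it, while on `ℂ_χ` it is multiplication by `χ s - 1 ≠ 0`.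
Hence `Hⁿ(G, ℂ_χ) = Extⁿ(ℂ, ℂ_χ)` is killed by an invertible map, i.e. vanishes.
-/

universe u

open CategoryTheory CategoryTheory.Limits

namespace CategoryTheory.CatCenter

variable {C : Type*} [Category C] [HasZeroMorphisms C] {ι : Type*} {c : ComplexShape ι}

def mapHomologicalComplex (w : CatCenter C) (K : HomologicalComplex C c) : K ⟶ K where
  f i := w.app (K.X i)
  comm' i j _ := (w.naturality (K.d i j)).symm

end CategoryTheory.CatCenter

section LinearYoneda

variable {C : Type*} [Category C] [Abelian C] (k : Type*) [Ring k] [Linear k C]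
  {K L : ChainComplex C ℕ}

noncomputable def ChainComplex.linearYonedaObjMap (f : K ⟶ L) (Y : C) :
    L.linearYonedaObj k Y ⟶ K.linearYonedaObj k Y :=
  (HomologicalComplex.unopFunctor _ _).map
    ((((linearYoneda k C).obj Y).rightOp.mapHomologicalComplex _).map f).op

noncomputable def Homotopy.linearYonedaObjMap {f g : K ⟶ L} (h : Homotopy f g) (Y : C) :
    Homotopy (ChainComplex.linearYonedaObjMap k f Y) (ChainComplex.linearYonedaObjMap k g Y) :=
  (((linearYoneda k C).obj Y).rightOp.mapHomotopy h).unop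

lemma ChainComplex.linearYonedaObjMap_zero (Y : C) :
    ChainComplex.linearYonedaObjMap k (0 : K ⟶ L) Y = 0 := by
  simp only [ChainComplex.linearYonedaObjMap, Functor.map_zero, op_zero]
  rfl

end LinearYoneda

namespace CategoryTheory.ProjectiveResolution

variable {C : Type*} [Category C] [Abelian C] {X : C} (P : ProjectiveResolution X)

noncomputable def homotopyZeroOfCatCenter (w : CatCenter C) (hw : w.app X = 0) :
    Homotopy (w.mapHomologicalComplex P.complex) 0 :=
  liftHomotopyZero _ <| HomologicalComplex.to_single_hom_ext <| by
    change w.app (P.complex.X 0) ≫ P.π.f 0 = 0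
    rw [← w.naturality]
    exact (congrArg (P.π.f 0 ≫ ·) hw).trans comp_zero

theorem isZero_homology_linearYonedaObj_of_catCenter (k : Type*) [Ring k] [Linear k C]
    (w : CatCenter C) (hX : w.app X = 0) (Y : C) [IsIso (w.app Y)] (n : ℕ) :
    IsZero ((P.complex.linearYonedaObj k Y).homology n) := by
  let Ψ := ChainComplex.linearYonedaObjMap k (w.mapHomologicalComplex P.complex) Y
  have hΨ : Homotopy Ψ 0 :=
    ((P.homotopyZeroOfCatCenter w hX).linearYonedaObjMap k Y).trans
      (.ofEq (ChainComplex.linearYonedaObjMap_zero k Y))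
  have hΨ_f (i : ℕ) :
      Ψ.f i = ((linearYoneda k C).map (w.app Y)).app (Opposite.op (P.complex.X i)) := by
    ext φ
    exact (w.naturality φ).symm
  have : ∀ i, IsIso (Ψ.f i) := fun i => by
    rw [hΨ_f]
    exact (((linearYoneda k C).mapIso (asIso (w.app Y))).app _).isIso_hom
  have : IsIso Ψ := HomologicalComplex.Hom.isIso_of_components Ψ
  have h : IsIso (HomologicalComplex.homologyMap Ψ n) := inferInstance
  rw [hΨ.homologyMap_eq, HomologicalComplex.homologyMap_zero,
    isIsoZero_iff_source_target_isZero] at h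
  exact h.1

end CategoryTheory.ProjectiveResolution

namespace Rep

variable {k G : Type*} [Semiring k] [CommMonoid G]

noncomputable def ρCatCenter (s : G) : CatCenter (Rep k G) where
  app A := ofHom ⟨A.ρ s, fun g => by
    rw [← Module.End.mul_eq_comp, ← Module.End.mul_eq_comp, ← map_mul, mul_comm, map_mul]⟩
  naturality A B f := by
    ext v
    exact (hom_comm_apply f s v).symm

lemma ρCatCenter_app_trivial (s : G) (V : Type*) [AddCommGroup V] [Module k V] :
    (ρCatCenter (k := k) s).app (trivial k G V) = 𝟙 _ := by
  ext v
  rfl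

end Rep

theorem groupCohomology.isZero_of_bijective_ρ_sub_self {k G : Type u} [CommRing k] [CommGroup G]
    (A : Rep k G) (s : G) (hs : Function.Bijective fun v : A ↦ A.ρ s v - v) (n : ℕ) :
    IsZero (groupCohomology A n) := by
  let w : CatCenter (Rep k G) := Rep.ρCatCenter s - 1
  have hk : w.app (Rep.trivial k G k) = 0 := by
    rw [CatCenter.app_sub, Rep.ρCatCenter_app_trivial]
    exact sub_self _
  have : IsIso ((forget (Rep k G)).map (w.app A)) := (isIso_iff_bijective _).2 hs
  have : IsIso (w.app A) := isIso_of_reflects_iso _ (forget (Rep k G))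
  exact ((Rep.barResolution k G).isZero_homology_linearYonedaObj_of_catCenter k w hk A n).of_iso
    (groupCohomologyIso A n _)

/-- Let `A` be the free abelian group of rank `d` (written multiplicatively)
and let `χ : A → ℂˣ` be a nontrivial group homomorphism.  Then the group cohomology
`H^i(A, ℂ_χ)` of `A` with coefficients in the one-dimensional representation `ℂ_χ` vanishes
for every `i ≥ 0`. -/
theorem groupCohomology_freeAbelian_nontrivial_char_eq_zero (d : ℕ)
    (χ : (Fin d → Multiplicative ℤ) →* ℂˣ) (hχ : χ ≠ 1) (i : ℕ) :
    Subsingleton (groupCohomology (charRep χ) i) := by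
  obtain ⟨s, hs⟩ : ∃ s, χ s ≠ 1 := by
    by_contra! h
    exact hχ (MonoidHom.ext h)
  have hχs : (χ s : ℂ) - 1 ≠ 0 := sub_ne_zero.2 (Units.val_eq_one.not.2 hs)
  refine ModuleCat.isZero_iff_subsingleton.1
    (groupCohomology.isZero_of_bijective_ρ_sub_self _ s ?_ i)
  show Function.Bijective fun v : ℂ ↦ (χ s : ℂ) * v - v
  simpa only [sub_one_mul] using mulLeft_bijective₀ _ hχs
end

section
/- Let A be the free abelian group of rank d (realized as Fin d → ℤ, written multiplicatively), let V be a finite-dimensional ℂ-linear representation of A, and let χ : A → ℂˣ be a group homomorphism with associated one-dimensional representation ℂ_χ. Then there exists a nonzero A-equivariant linear map V → ℂ_χ (i.e. χ appears as a quotient of V) if and only if there exists a nonzero A-equivariant linear map ℂ_χ → V (i.e. χ appears as a subrepresentation of V). -/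
/-!
Write `N g = ρ g - χ g`. A nonzero equivariant map `ℂ_χ → V` is a nonzero vector of `⋂ ker N g`,
and a nonzero equivariant map `V → ℂ_χ` is a nonzero functional vanishing on `∑ range N g`, which
exists iff that sum is proper. As the `N g` commute, `⋂ ker N g = 0 ↔ ∑ range N g = V`: by the
chain conditions only finitely many `g` matter, and we induct on their number, for all jointly
invariant subspaces `p` at once. Adding an operator `f`, the Fitting decomposition splits `p` into
a part where `f` is nilpotent and a part where `f` is invertible. The invertible part meets no
kernel of `f` and lies in the range of `f`, and on the nilpotent part adding `f` changes neither
condition, so both reduce to the induction hypothesis on the nilpotent part.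
-/

open LinearMap Submodule Module.End

variable {R M : Type*} [Ring R] [AddCommGroup M] [Module R M]

theorem Commute.ker_mem_invtSubmodule {f g : Module.End R M} (h : Commute f g) :
    ker g ∈ f.invtSubmodule := fun x hx => by
  rw [Submodule.mem_comap, mem_ker, ← mul_apply, ← h.eq, mul_apply, mem_ker.mp hx, map_zero]

theorem Commute.map_mem_invtSubmodule {f g : Module.End R M} (h : Commute f g)
    {p : Submodule R M} (hp : p ∈ f.invtSubmodule) : p.map g ∈ f.invtSubmodule := by
  rintro _ ⟨x, hx, rfl⟩
  exact ⟨f x, hp hx, by rw [← mul_apply, ← h.eq, mul_apply]⟩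

namespace Submodule

theorem eq_bot_of_disjoint_ker_of_le_ker_pow {f : Module.End R M} {q : Submodule R M} {n : ℕ}
    (hqf : q ∈ f.invtSubmodule) (hq : q ≤ ker (f ^ n)) (h : Disjoint q (ker f)) : q = ⊥ := by
  induction n with
  | zero => rwa [pow_zero, one_eq_id, ker_id, le_bot_iff] at hq
  | succ n ih =>
    refine ih fun x hx => ?_
    have hfx : (f ^ n) x ∈ q := pow_apply_mem_of_forall_mem n hqf x hx
    have hffx : f ((f ^ n) x) = 0 := by rw [← mul_apply, ← pow_succ']; exact hq hx
    exact disjoint_def.mp h _ hfx hffx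

theorem map_sup_eq_iff_of_le_ker_pow {f : Module.End R M} {q r : Submodule R M} {n : ℕ}
    (hqf : q ∈ f.invtSubmodule) (hrf : r ∈ f.invtSubmodule) (hq : q ≤ ker (f ^ n)) :
    q.map f ⊔ r = q ↔ r = q := by
  refine ⟨fun h => ?_, fun h => by rw [h, sup_eq_right]; exact map_le_iff_le_comap.mpr hqf⟩
  have hpow : ∀ k, q.map (f ^ k) ⊔ r = q := by
    intro k
    induction k with
    | zero => rw [pow_zero, one_eq_id, map_id, sup_eq_left, ← h]; exact le_sup_right
    | succ k ih =>
      calc q.map (f ^ (k + 1)) ⊔ r = (q.map (f ^ k) ⊔ r).map f ⊔ r := by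
            rw [map_sup, pow_succ', mul_eq_comp, map_comp, sup_assoc,
              sup_eq_right.mpr (map_le_iff_le_comap.mpr hrf)]
        _ = q := by rw [ih, h]
  rw [← hpow n, le_ker_iff_map.mp hq, bot_sup_eq]

/-- The Fitting decomposition of an `f`-invariant submodule. -/
theorem eventually_disjoint_and_inf_ker_pow_sup_map_pow_eq [IsNoetherian R M] [IsArtinian R M]
    {f : Module.End R M} {p : Submodule R M} (hpf : p ∈ f.invtSubmodule) :
    ∀ᶠ n in Filter.atTop, Disjoint (p ⊓ ker (f ^ n)) (p.map (f ^ n)) ∧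
      p ⊓ ker (f ^ n) ⊔ p.map (f ^ n) = p := by
  rw [mem_invtSubmodule_iff_forall_mem_of_mem] at hpf
  filter_upwards [(f.restrict hpf).eventually_isCompl_ker_pow_range_pow] with n hn
  have hker : (ker ((f.restrict hpf) ^ n)).map p.subtype = p ⊓ ker (f ^ n) := by
    rw [pow_restrict, ker_restrict, map_comap_subtype]
  have hrange : (range ((f.restrict hpf) ^ n)).map p.subtype = p.map (f ^ n) := by
    rw [pow_restrict, range_restrict, map_comap_subtype, inf_eq_right]
    exact map_le_iff_le_comap.mpr fun x hx => pow_apply_mem_of_forall_mem n hpf x hx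
  rw [← hker, ← hrange]
  exact ⟨disjoint_map p.injective_subtype hn.disjoint, by
    rw [← map_sup, hn.sup_eq_top, map_subtype_top]⟩

theorem inf_inf_ker_eq_bot_iff {f : Module.End R M} {p K : Submodule R M} {n : ℕ} (hn : n ≠ 0)
    (hpf : p ∈ f.invtSubmodule) (hKf : K ∈ f.invtSubmodule) :
    p ⊓ (ker f ⊓ K) = ⊥ ↔ p ⊓ ker (f ^ n) ⊓ K = ⊥ := by
  have hker : ker f ≤ ker (f ^ n) := fun x hx => by
    rw [mem_ker, ← Nat.sub_add_cancel (Nat.one_le_iff_ne_zero.mpr hn), pow_succ, mul_apply,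
      mem_ker.mp hx, map_zero]
  refine ⟨fun h => ?_, fun h => le_bot_iff.mp ?_⟩
  · have hqf : p ⊓ ker (f ^ n) ⊓ K ∈ f.invtSubmodule := invtSubmodule.inf_mem
      (invtSubmodule.inf_mem hpf (Commute.self_pow f n).ker_mem_invtSubmodule) hKf
    refine eq_bot_of_disjoint_ker_of_le_ker_pow hqf (inf_le_left.trans inf_le_right) ?_
    rw [disjoint_iff_inf_le, ← h]
    rintro x ⟨⟨⟨hxp, -⟩, hxK⟩, hxf⟩
    exact ⟨hxp, hxf, hxK⟩
  · rw [← h, inf_assoc]; exact inf_le_inf_left p (inf_le_inf_right K hker)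

variable {ι : Type*} {N : ι → Module.End R M}

theorem finsetSup_map_sup_eq_iff {t : Finset ι} {a : ι} (ha : a ∈ t) {p₀ p₁ : Submodule R M}
    (hdisj : Disjoint p₀ p₁) (hp₀ : ∀ i, p₀ ∈ (N i).invtSubmodule)
    (hp₁ : ∀ i, p₁ ∈ (N i).invtSubmodule) (hp₁a : p₁ ≤ (p₀ ⊔ p₁).map (N a)) :
    t.sup (fun i => (p₀ ⊔ p₁).map (N i)) = p₀ ⊔ p₁ ↔ t.sup (fun i => p₀.map (N i)) = p₀ := by
  have hT₀ : t.sup (fun i => p₀.map (N i)) ≤ p₀ :=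
    Finset.sup_le fun i _ => map_le_iff_le_comap.mpr (hp₀ i)
  have hT : t.sup (fun i => (p₀ ⊔ p₁).map (N i)) = t.sup (fun i => p₀.map (N i)) ⊔ p₁ := by
    refine le_antisymm ?_ (sup_le ?_ ?_)
    · refine Finset.sup_le fun i hi => ?_
      rw [map_sup]
      exact sup_le_sup (Finset.le_sup (f := fun i => p₀.map (N i)) hi)
        (map_le_iff_le_comap.mpr (hp₁ i))
    · exact Finset.sup_mono_fun fun i _ => map_mono le_sup_left
    · exact hp₁a.trans (Finset.le_sup (f := fun i => (p₀ ⊔ p₁).map (N i)) ha)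
  rw [hT]
  refine ⟨fun h => eq_of_le_of_inf_le_of_le_sup hT₀ ?_ (le_sup_left.trans h.ge), fun h => by rw [h]⟩
  rw [hdisj.eq_bot]; exact bot_le

theorem inf_finsetInf_ker_eq_bot_iff_finsetSup_map_eq [IsNoetherian R M] [IsArtinian R M]
    [DecidableEq ι] (hN : ∀ i j, Commute (N i) (N j)) (s : Finset ι) {p : Submodule R M}
    (hp : ∀ i, p ∈ (N i).invtSubmodule) :
    p ⊓ s.inf (fun i => ker (N i)) = ⊥ ↔ s.sup (fun i => p.map (N i)) = p := by
  induction s using Finset.induction_on generalizing p with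
  | empty => simp [eq_comm]
  | insert a s _ ih =>
    obtain ⟨n, hn, hdisj, hsup⟩ := ((Filter.eventually_ne_atTop 0).and
      (eventually_disjoint_and_inf_ker_pow_sup_map_pow_eq (hp a))).exists
    have hcomm : ∀ i, Commute (N i) (N a ^ n) := fun i => (hN i a).pow_right n
    have hp₀ : ∀ i, p ⊓ ker (N a ^ n) ∈ (N i).invtSubmodule := fun i =>
      invtSubmodule.inf_mem (hp i) (hcomm i).ker_mem_invtSubmodule
    have hp₁ : ∀ i, p.map (N a ^ n) ∈ (N i).invtSubmodule := fun i =>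
      (hcomm i).map_mem_invtSubmodule (hp i)
    have hK : s.inf (fun i => ker (N i)) ∈ (N a).invtSubmodule :=
      Finset.inf_induction (invtSubmodule.top_mem _) (fun _ h₁ _ h₂ => invtSubmodule.inf_mem h₁ h₂)
        fun i _ => (hN a i).ker_mem_invtSubmodule
    have hR : s.sup (fun i => (p ⊓ ker (N a ^ n)).map (N i)) ∈ (N a).invtSubmodule :=
      Finset.sup_induction (invtSubmodule.bot_mem _) (fun _ h₁ _ h₂ => invtSubmodule.sup_mem h₁ h₂)
        fun i _ => (hN a i).map_mem_invtSubmodule (hp₀ a)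
    have hp₁a : p.map (N a ^ n) ≤ p.map (N a) := by
      rw [← Nat.sub_add_cancel (Nat.one_le_iff_ne_zero.mpr hn), pow_succ', mul_eq_comp, map_comp]
      exact map_mono (map_le_iff_le_comap.mpr fun x hx => pow_apply_mem_of_forall_mem _ (hp a) x hx)
    -- with `p₀ = p ⊓ ker (N a ^ n)`: kernel condition on `p` ↔ on `p₀` ↔ (induction)
    -- range condition on `p₀` without `N a` ↔ with `N a` ↔ on `p = p₀ ⊔ map (N a ^ n) p`
    rw [Finset.inf_insert, inf_inf_ker_eq_bot_iff hn (hp a) hK, ih hp₀,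
      ← map_sup_eq_iff_of_le_ker_pow (hp₀ a) hR inf_le_right,
      ← Finset.sup_insert (f := fun i => (p ⊓ ker (N a ^ n)).map (N i)),
      ← finsetSup_map_sup_eq_iff (Finset.mem_insert_self a s) hdisj hp₀ hp₁ (hsup.symm ▸ hp₁a),
      hsup]

end Submodule

namespace Module.End

variable {ι : Type*}

theorem iInf_ker_eq_bot_iff_iSup_range_eq_top [IsNoetherian R M] [IsArtinian R M]
    {N : ι → Module.End R M} (hN : ∀ i j, Commute (N i) (N j)) :
    ⨅ i, ker (N i) = ⊥ ↔ ⨆ i, range (N i) = ⊤ := by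
  classical
  obtain ⟨s, hs⟩ := Finset.exists_inf_eq_iInf fun i => ker (N i)
  obtain ⟨t, ht⟩ := Finset.exists_sup_eq_iSup fun i => range (N i)
  have hinf : (s ∪ t).inf (fun i => ker (N i)) = ⨅ i, ker (N i) :=
    le_antisymm (hs ▸ Finset.inf_mono Finset.subset_union_left)
      (Finset.le_inf fun i _ => iInf_le _ i)
  have hsup : (s ∪ t).sup (fun i => range (N i)) = ⨆ i, range (N i) :=
    le_antisymm (Finset.sup_le fun i _ => le_iSup (fun i => range (N i)) i)
      (ht ▸ Finset.sup_mono Finset.subset_union_right)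
  simpa only [top_inf_eq, Submodule.map_top, hinf, hsup] using
    inf_finsetInf_ker_eq_bot_iff_finsetSup_map_eq hN (s ∪ t) (p := ⊤) fun i =>
      invtSubmodule.top_mem _

variable {K V : Type*} [Field K] [AddCommGroup V] [Module K V]

theorem exists_ne_zero_forall_apply_eq_smul_iff (T : ι → Module.End K V) (c : ι → K) :
    (∃ v : V, v ≠ 0 ∧ ∀ i, T i v = c i • v) ↔ ⨅ i, ker (T i - algebraMap K _ (c i)) ≠ ⊥ := by
  simp only [ne_eq, Submodule.eq_bot_iff, not_forall, exists_prop, Submodule.mem_iInf, mem_ker,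
    LinearMap.sub_apply, algebraMap_end_apply, sub_eq_zero]
  exact exists_congr fun v => and_comm

theorem exists_dual_ne_zero_forall_apply_eq_mul_iff (T : ι → Module.End K V) (c : ι → K) :
    (∃ φ : Module.Dual K V, φ ≠ 0 ∧ ∀ i x, φ (T i x) = c i * φ x) ↔
      ⨆ i, range (T i - algebraMap K _ (c i)) ≠ ⊤ := by
  have hrange : ∀ φ : Module.Dual K V, (⨆ i, range (T i - algebraMap K _ (c i)) ≤ ker φ) ↔
      ∀ i x, φ (T i x) = c i * φ x := by
    simp only [iSup_le_iff, LinearMap.range_le_iff_comap, Submodule.eq_top_iff',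
      Submodule.mem_comap, mem_ker, LinearMap.sub_apply, algebraMap_end_apply, map_sub, map_smul,
      smul_eq_mul, sub_eq_zero, implies_true]
  constructor
  · rintro ⟨φ, hφ, h⟩ htop
    exact hφ (ker_eq_top.mp (top_le_iff.mp (htop ▸ (hrange φ).mpr h)))
  · intro h
    obtain ⟨φ, hφ, hle⟩ := Submodule.exists_le_ker_of_lt_top _ (lt_top_iff_ne_top.mpr h)
    exact ⟨φ, hφ, (hrange φ).mp hle⟩

theorem exists_dual_eigenvector_iff_exists_eigenvector [FiniteDimensional K V]
    {T : ι → Module.End K V} (hT : ∀ i j, Commute (T i) (T j)) (c : ι → K) :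
    (∃ φ : Module.Dual K V, φ ≠ 0 ∧ ∀ i x, φ (T i x) = c i * φ x) ↔
      ∃ v : V, v ≠ 0 ∧ ∀ i, T i v = c i • v := by
  rw [exists_dual_ne_zero_forall_apply_eq_mul_iff, exists_ne_zero_forall_apply_eq_smul_iff,
    ne_eq, ne_eq, not_iff_not]
  refine (iInf_ker_eq_bot_iff_iSup_range_eq_top fun i j => ?_).symm
  exact ((hT i j).sub_right (Algebra.commute_algebraMap_right _ _)).sub_left
    (Algebra.commute_algebraMap_left _ _)

end Module.End

theorem Rep.exists_ne_zero_iff_exists_intertwiningMap_ne_zero {k H : Type*} [Semiring k]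
    [Monoid H] {A B : Rep k H} :
    (∃ f : A ⟶ B, f ≠ 0) ↔ ∃ f : A.ρ.IntertwiningMap B.ρ, f ≠ 0 :=
  Rep.homEquiv.exists_congr fun _ => (Rep.hom_injective.ne_iff' Rep.zero_hom).symm

variable {G : Type} [Group G]

theorem exists_charRep_hom_ne_zero_iff (V : Rep ℂ G) (χ : G →* ℂˣ) :
    (∃ f : charRep χ ⟶ V, f ≠ 0) ↔ ∃ v : V, v ≠ 0 ∧ ∀ g, V.ρ g v = (χ g : ℂ) • v := by
  rw [Rep.exists_ne_zero_iff_exists_intertwiningMap_ne_zero]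
  -- exposes the carrier `ℂ`, so that `(1 : ℂ)` is an element of `charRep χ`
  unfold charRep
  constructor
  · rintro ⟨f, hf⟩
    have hf_apply : ∀ x : ℂ, f x = x • f (1 : ℂ) := fun x => by
      rw [← map_smul, smul_eq_mul, mul_one]
    refine ⟨f (1 : ℂ), fun h => hf ?_, fun g => ?_⟩
    · exact Representation.IntertwiningMap.ext (LinearMap.ext_ring h)
    · rw [← f.isIntertwining, hf_apply]
      simp
  · rintro ⟨v, hv, h⟩
    refine ⟨⟨LinearMap.toSpanSingleton ℂ V v, fun g => ?_⟩, fun h0 => hv ?_⟩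
    · refine LinearMap.ext_ring ?_
      simp [h]
    · simpa using congr(($h0).toLinearMap (1 : ℂ))

theorem exists_hom_charRep_ne_zero_iff (V : Rep ℂ G) (χ : G →* ℂˣ) :
    (∃ f : V ⟶ charRep χ, f ≠ 0) ↔
      ∃ φ : Module.Dual ℂ V, φ ≠ 0 ∧ ∀ g x, φ (V.ρ g x) = (χ g : ℂ) * φ x := by
  rw [Rep.exists_ne_zero_iff_exists_intertwiningMap_ne_zero]
  constructor
  · rintro ⟨f, hf⟩
    exact ⟨f.toLinearMap, fun h => hf (Representation.IntertwiningMap.ext h), f.isIntertwining⟩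
  · rintro ⟨φ, hφ, h⟩
    exact ⟨⟨φ, fun g => LinearMap.ext (h g)⟩, fun h0 => hφ congr(($h0).toLinearMap)⟩

/-- Let `A` be the free abelian group of rank `d` (written multiplicatively),
let `V` be a finite-dimensional `ℂ`-linear representation of `A`, and let `χ : A → ℂˣ` be a
group homomorphism with associated one-dimensional representation `ℂ_χ`.  Then `χ` appears as a
quotient of `V` (there is a nonzero `A`-equivariant map `V → ℂ_χ`) if and only if `χ` appears
as a subrepresentation of `V` (there is a nonzero `A`-equivariant map `ℂ_χ → V`). -/
theorem char_quotient_iff_char_sub (d : ℕ)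
    (V : Rep ℂ (Fin d → Multiplicative ℤ)) [FiniteDimensional ℂ V]
    (χ : (Fin d → Multiplicative ℤ) →* ℂˣ) :
    (∃ f : V ⟶ charRep χ, f ≠ 0) ↔ (∃ f : charRep χ ⟶ V, f ≠ 0) := by
  rw [exists_hom_charRep_ne_zero_iff, exists_charRep_hom_ne_zero_iff]
  refine Module.End.exists_dual_eigenvector_iff_exists_eigenvector (fun g h => ?_) _
  rw [Commute, SemiconjBy, ← map_mul, ← map_mul, mul_comm]
end
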